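/- arXiv:1101.2859 — 2 statements merged into one kernel-verified Lean document; each statement's English description precedes it below -/
import Mathlib

section
/- Let H be a complex Hilbert space, (X, ν) a measure space, and ψ : X → H a family such that x ↦ ⟨ψ_x, f⟩ is ν-measurable for every f ∈ H, with analysis operator C defined on Dom(C) = {f ∈ H : x ↦ ⟨ψ_x, f⟩ ∈ L²(X, ν)}. If ψ_y ∈ Dom(C) for every y ∈ X, then Dom(C) is dense in H. -/
open MeasureTheory
open scoped ComplexInnerProductSpace ENNReal

section

variable {𝕜 H X : Type*} [RCLike 𝕜] [NormedAddCommGroup H] [InnerProductSpace 𝕜 H]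
  [MeasurableSpace X]

def analysisDomain (p : ℝ≥0∞) (ν : Measure X) (ψ : X → H) : Submodule 𝕜 H where
  carrier := {f | MemLp (fun x => inner 𝕜 (ψ x) f) p ν}
  zero_mem' := by simpa only [Set.mem_ofPred_eq, inner_zero_right] using MemLp.zero' (ε := 𝕜)
  add_mem' hf hg := by simp only [Set.mem_ofPred_eq, inner_add_right]; exact hf.add hg
  smul_mem' c _ hf := by simpa only [Set.mem_ofPred_eq, inner_smul_right] using hf.const_mul c

theorem orthogonal_span_range_le_analysisDomain (p : ℝ≥0∞) (ν : Measure X) (ψ : X → H) :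
    (Submodule.span 𝕜 (Set.range ψ))ᗮ ≤ analysisDomain p ν ψ := by
  intro f hf
  have hzero : (fun x => inner 𝕜 (ψ x) f) = 0 :=
    funext fun x => hf (ψ x) (Submodule.subset_span ⟨x, rfl⟩)
  show MemLp _ p ν
  rw [hzero]
  exact MemLp.zero

theorem Submodule.dense_of_le_of_orthogonal_le [CompleteSpace H] {K D : Submodule 𝕜 H}
    (hK : K ≤ D) (hKo : Kᗮ ≤ D) : Dense (D : Set H) := by
  rw [Submodule.dense_iff_topologicalClosure_eq_top, Submodule.topologicalClosure_eq_top_iff,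
    eq_bot_iff, ← D.inf_orthogonal_eq_bot]
  exact le_inf ((Submodule.orthogonal_le hK).trans hKo) le_rfl

end

theorem analysis_operator_densely_defined_general
    {H : Type*} [NormedAddCommGroup H] [InnerProductSpace ℂ H] [CompleteSpace H]
    {X : Type*} [MeasurableSpace X] (ν : Measure X)
    (ψ : X → H)
    (hdom : ∀ y : X, MemLp (fun x => ⟪ψ x, ψ y⟫) 2 ν) :
    Dense {f : H | MemLp (fun x => ⟪ψ x, f⟫) 2 ν} := by
  have hspan : Submodule.span ℂ (Set.range ψ) ≤ analysisDomain 2 ν ψ :=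
    Submodule.span_le.mpr (Set.range_subset_iff.mpr hdom)
  exact Submodule.dense_of_le_of_orthogonal_le hspan
    (orthogonal_span_range_le_analysisDomain 2 ν ψ)

/-- If every vector `ψ y` of the family belongs to the domain of the
analysis operator `C` (i.e. its coefficient function is in `L²(X, ν)`), then
`Dom(C) = {f | (fun x => ⟪ψ x, f⟫) ∈ L²(X, ν)}` is dense in `H`. -/
theorem analysis_operator_densely_defined
    {H : Type*} [NormedAddCommGroup H] [InnerProductSpace ℂ H] [CompleteSpace H]
    {X : Type*} [MeasurableSpace X] (ν : Measure X)
    (ψ : X → H)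
    (hmeas : ∀ f : H, AEMeasurable (fun x => ⟪ψ x, f⟫) ν)
    (hdom : ∀ y : X, MemLp (fun x => ⟪ψ x, ψ y⟫) 2 ν) :
    Dense {f : H | MemLp (fun x => ⟪ψ x, f⟫) 2 ν} :=
  analysis_operator_densely_defined_general ν ψ hdom
end

section
/- Let H be a complex Hilbert space, ι a countable index type, and ψ : ι → H a regular upper semi-frame with frame operator S and g_k the unique vector with S g_k = ψ_k. If for every f ∈ H the family (|⟨g_k, f⟩|²)_k is summable (i.e. the coefficient sequence (⟨g_k, f⟩)_k lies in ℓ²(ι) for every f), then S⁻¹ is bounded; equivalently, there exists m > 0 such that m‖f‖² ≤ ∑_k |⟨ψ_k, f⟩|² for all f ∈ H, so that ψ is in fact a frame. -/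
open scoped ComplexInnerProductSpace

/-!
The hypothesis on `g` says that its analysis operator `C_g f = (⟪g k, f⟫)ₖ` maps `H` into `ℓ²`.
Its graph is closed, so it is bounded by the closed graph theorem, and its adjoint is the synthesis
operator `c ↦ ∑ cₖ • g k`. Applying `S` to `∑ ⟪ψ k, f⟫ • g k` gives `∑ ⟪ψ k, f⟫ • ψ k = S f`, so
injectivity of `S` yields the reconstruction formula `C_g† C_ψ = 1`. Hence
`‖f‖ ≤ ‖C_g‖ ‖C_ψ f‖`, and `‖C_ψ f‖²` is the frame sum.
-/

open scoped lp InnerProduct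

section AnalysisOperator

variable {H : Type*} [NormedAddCommGroup H] [InnerProductSpace ℂ H] {ι : Type*}

noncomputable def analysisOperatorₗ (g : ι → H)
    (hg : ∀ f, Summable fun k => ‖⟪g k, f⟫‖ ^ 2) : H →ₗ[ℂ] ℓ²(ι, ℂ) where
  toFun f := ⟨fun k => ⟪g k, f⟫, memℓp_gen (by simpa using hg f)⟩
  map_add' _ _ := lp.ext <| funext fun _ => inner_add_right _ _ _
  map_smul' _ _ := lp.ext <| funext fun _ => inner_smul_right _ _ _

theorem isClosed_graph_analysisOperatorₗ (g : ι → H)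
    (hg : ∀ f, Summable fun k => ‖⟪g k, f⟫‖ ^ 2) :
    IsClosed ((analysisOperatorₗ g hg).graph : Set (H × ℓ²(ι, ℂ))) := by
  have hgraph : ((analysisOperatorₗ g hg).graph : Set (H × ℓ²(ι, ℂ))) =
      ⋂ k, {p | p.2 k = ⟪g k, p.1⟫} := by
    ext ⟨f, c⟩
    simp only [SetLike.mem_coe, LinearMap.mem_graph_iff, Set.mem_iInter, Set.mem_ofPred_eq]
    exact ⟨fun h k => h ▸ rfl, fun h => lp.ext (funext h)⟩
  rw [hgraph]
  exact isClosed_iInter fun k => isClosed_eq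
    ((lp.evalCLM ℂ (E := fun _ : ι => ℂ) (p := 2) k).continuous.comp continuous_snd)
    ((innerSL ℂ (g k)).continuous.comp continuous_fst)

variable [CompleteSpace H]

noncomputable def analysisOperator (g : ι → H)
    (hg : ∀ f, Summable fun k => ‖⟪g k, f⟫‖ ^ 2) : H →L[ℂ] ℓ²(ι, ℂ) :=
  .ofIsClosedGraph (isClosed_graph_analysisOperatorₗ g hg)

variable {g : ι → H} {hg : ∀ f, Summable fun k => ‖⟪g k, f⟫‖ ^ 2}

@[simp]
theorem analysisOperator_apply (f : H) (k : ι) : analysisOperator g hg f k = ⟪g k, f⟫ :=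
  rfl

theorem norm_analysisOperator_sq (f : H) :
    ‖analysisOperator g hg f‖ ^ 2 = ∑' k, ‖⟪g k, f⟫‖ ^ 2 := by
  simpa using lp.norm_rpow_eq_tsum (p := 2) (by norm_num) (analysisOperator g hg f)

theorem adjoint_analysisOperator_single [DecidableEq ι] (k : ι) (c : ℂ) :
    ((analysisOperator g hg)†) (lp.single 2 k c) = c • g k :=
  ext_inner_left ℂ fun f => by
    rw [ContinuousLinearMap.adjoint_inner_right, lp.inner_single_right, analysisOperator_apply,
      inner_smul_right, RCLike.inner_apply, inner_conj_symm]

theorem hasSum_smul_adjoint_analysisOperator (c : ℓ²(ι, ℂ)) :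
    HasSum (fun k => c k • g k) (((analysisOperator g hg)†) c) := by
  classical
  simpa only [adjoint_analysisOperator_single] using
    (lp.hasSum_single ENNReal.ofNat_ne_top c).mapL ((analysisOperator g hg)†)

theorem adjoint_analysisOperator_comp_analysisOperator_eq_id {ψ : ι → H}
    {hψ : ∀ f, Summable fun k => ‖⟪ψ k, f⟫‖ ^ 2} {S : H →L[ℂ] H}
    (hS : ∀ f, HasSum (fun k => ⟪ψ k, f⟫ • ψ k) (S f)) (hSinj : Function.Injective S)
    (hreg : ∀ k, S (g k) = ψ k) :
    (analysisOperator g hg)† ∘L analysisOperator ψ hψ = .id ℂ H := by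
  ext f
  refine hSinj (((hasSum_smul_adjoint_analysisOperator (analysisOperator ψ hψ f)).mapL S).unique ?_)
  simpa [hreg] using hS f

end AnalysisOperator

theorem ContinuousLinearMap.exists_pos_mul_norm_sq_le_of_comp_eq_id {𝕜 E F : Type*}
    [NontriviallyNormedField 𝕜] [SeminormedAddCommGroup E] [SeminormedAddCommGroup F]
    [NormedSpace 𝕜 E] [NormedSpace 𝕜 F] {A : F →L[𝕜] E} {B : E →L[𝕜] F}
    (h : A ∘L B = .id 𝕜 E) : ∃ m : ℝ, 0 < m ∧ ∀ x, m * ‖x‖ ^ 2 ≤ ‖B x‖ ^ 2 := by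
  refine ⟨(‖A‖ ^ 2 + 1)⁻¹, by positivity, fun x => ?_⟩
  have hx : ‖x‖ ≤ ‖A‖ * ‖B x‖ :=
    calc ‖x‖ = ‖A (B x)‖ := by rw [← ContinuousLinearMap.comp_apply, h, id_apply]
      _ ≤ ‖A‖ * ‖B x‖ := A.le_opNorm (B x)
  rw [inv_mul_le_iff₀ (by positivity)]
  calc ‖x‖ ^ 2 ≤ (‖A‖ * ‖B x‖) ^ 2 := by gcongr
    _ ≤ (‖A‖ ^ 2 + 1) * ‖B x‖ ^ 2 := by nlinarith [sq_nonneg ‖B x‖]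

theorem regular_upper_semiframe_dual_coefficients_l2_implies_frame_general
    {H : Type*} [NormedAddCommGroup H] [InnerProductSpace ℂ H] [CompleteSpace H]
    {ι : Type*} (ψ : ι → H) (M : ℝ)
    (hbessel : ∀ f : H, Summable (fun k => ‖⟪ψ k, f⟫‖ ^ 2) ∧
      ∑' k, ‖⟪ψ k, f⟫‖ ^ 2 ≤ M * ‖f‖ ^ 2)
    (S : H →L[ℂ] H)
    (hS : ∀ f : H, HasSum (fun k => ⟪ψ k, f⟫ • ψ k) (S f))
    (hSinj : Function.Injective ⇑S)
    (g : ι → H) (hreg : ∀ k, S (g k) = ψ k)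
    (hcoef : ∀ f : H, Summable (fun k => ‖⟪g k, f⟫‖ ^ 2)) :
    ∃ m : ℝ, 0 < m ∧ ∀ f : H, m * ‖f‖ ^ 2 ≤ ∑' k, ‖⟪ψ k, f⟫‖ ^ 2 := by
  have hψ : ∀ f, Summable fun k => ‖⟪ψ k, f⟫‖ ^ 2 := fun f => (hbessel f).1
  have hrec : (analysisOperator g hcoef)† ∘L analysisOperator ψ hψ = .id ℂ H :=
    adjoint_analysisOperator_comp_analysisOperator_eq_id hS hSinj hreg
  obtain ⟨m, hm, hle⟩ := ContinuousLinearMap.exists_pos_mul_norm_sq_le_of_comp_eq_id hrec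
  exact ⟨m, hm, fun f => norm_analysisOperator_sq (hg := hψ) f ▸ hle f⟩

/-- Let `ψ : ι → H` be a regular (discrete) upper semi-frame with frame
operator `S` and `g k = S⁻¹ ψ k`.  If the coefficient sequence `(⟪g k, f⟫)ₖ` is
square-summable for every `f ∈ H`, then `ψ` satisfies a lower frame bound, i.e. `ψ` is in
fact a frame (equivalently, `S⁻¹` is bounded). -/
theorem regular_upper_semiframe_dual_coefficients_l2_implies_frame
    {H : Type*} [NormedAddCommGroup H] [InnerProductSpace ℂ H] [CompleteSpace H]
    {ι : Type*} [Countable ι] (ψ : ι → H) (M : ℝ)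
    (hbessel : ∀ f : H, Summable (fun k => ‖⟪ψ k, f⟫‖ ^ 2) ∧
      ∑' k, ‖⟪ψ k, f⟫‖ ^ 2 ≤ M * ‖f‖ ^ 2)
    (htotal : (Submodule.span ℂ (Set.range ψ)).topologicalClosure = ⊤)
    (S : H →L[ℂ] H)
    (hS : ∀ f : H, HasSum (fun k => ⟪ψ k, f⟫ • ψ k) (S f))
    (hSinj : Function.Injective ⇑S)
    (g : ι → H) (hreg : ∀ k, S (g k) = ψ k)
    (hcoef : ∀ f : H, Summable (fun k => ‖⟪g k, f⟫‖ ^ 2)) :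
    ∃ m : ℝ, 0 < m ∧ ∀ f : H, m * ‖f‖ ^ 2 ≤ ∑' k, ‖⟪ψ k, f⟫‖ ^ 2 :=
  regular_upper_semiframe_dual_coefficients_l2_implies_frame_general ψ M hbessel S hS hSinj g hreg
    hcoef
end
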